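/- A word w is sortable by a pop stack of depth k if and only if w avoids the patterns 120, 201, 1010, and the strictly decreasing pattern k(k-1)...10 of length k+1. -/

import Mathlib

def Contains120 (w : List ℕ) : Prop :=
  ∃ i j k, i < j ∧ j < k ∧ k < w.length ∧ w.getD k 0 < w.getD i 0 ∧ w.getD i 0 < w.getD j 0

def Contains201 (w : List ℕ) : Prop :=
  ∃ i j k, i < j ∧ j < k ∧ k < w.length ∧ w.getD j 0 < w.getD k 0 ∧ w.getD k 0 < w.getD i 0

def Contains210 (w : List ℕ) : Prop :=
  ∃ i j k, i < j ∧ j < k ∧ k < w.length ∧ w.getD k 0 < w.getD j 0 ∧ w.getD j 0 < w.getD i 0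

def Contains1010 (w : List ℕ) : Prop :=
  ∃ i j k l, i < j ∧ j < k ∧ k < l ∧ l < w.length ∧
    w.getD j 0 = w.getD l 0 ∧ w.getD l 0 < w.getD i 0 ∧ w.getD i 0 = w.getD k 0

/-- w has a strictly decreasing subsequence of length m, i.e. contains the pattern
(m-1)(m-2)...10. -/
def ContainsDec (m : ℕ) (w : List ℕ) : Prop :=
  ∃ s : Fin m → ℕ, StrictMono s ∧ (∀ a, s a < w.length) ∧
    ∀ a b : Fin m, a < b → w.getD (s b) 0 < w.getD (s a) 0

/-- One step of a pop stack of depth k, acting on states (input, stack, output):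
one may push the next input letter on top of the stack provided the stack stays weakly
decreasing from the top and contains at most k distinct values, or pop the entire stack
to the output. -/
inductive PopStep (k : ℕ) : List ℕ × List ℕ × List ℕ → List ℕ × List ℕ × List ℕ → Prop
  | push (x : ℕ) (xs st out : List ℕ) :
      (st = [] ∨ x ≤ st.headI) → (x :: st).dedup.length ≤ k →
      PopStep k (x :: xs, st, out) (xs, x :: st, out)
  | pop (xs st out : List ℕ) : st ≠ [] → PopStep k (xs, st, out) (xs, [], out ++ st)

/-- w is sortable by a pop stack of depth k: some sequence of legal operations consumes
the input and produces a weakly increasing output. -/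
def PopSortableDepth (k : ℕ) (w : List ℕ) : Prop :=
  ∃ out : List ℕ, Relation.ReflTransGen (PopStep k) (w, [], []) ([], [], out) ∧
    List.Pairwise (· ≤ ·) out

/-!
A word is pop-stack sortable exactly when it is a weak direct sum `b₁ ++ b₂ ++ ⋯` of nonempty
weakly decreasing blocks with at most `k` distinct values each, every letter of a block being
at most every later letter: each block is pushed in one go and then popped. The four patterns
are sum-indecomposable, so an occurrence in such a word lies inside one block, where none of
them fits (`120`, `201`, `1010` contain an ascent, `k(k-1)…0` needs `k + 1` values).
Conversely, in a word avoiding the patterns the maximal weakly decreasing prefix is such a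
block: a later letter below its first letter completes a `120`, `201` or `1010`.
-/

open scoped List

namespace List

variable {α : Type*}

theorem ofFn_getD_sublist (d : α) {n : ℕ} {w : List α} {f : Fin n → ℕ} (hf : StrictMono f)
    (hlt : ∀ a, f a < w.length) : ofFn (fun a => w.getD (f a) d) <+ w := by
  rw [sublist_iff_exists_fin_orderEmbedding_get_eq]
  refine ⟨OrderEmbedding.ofStrictMono (fun a => ⟨f (a.cast length_ofFn), hlt _⟩)
    fun a b hab => hf hab, fun a => ?_⟩
  simp only [get_eq_getElem, getD_eq_getElem?_getD, getElem?_eq_getElem (hlt _),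
    Option.getD_some, List.getElem_ofFn]
  rfl

theorem sublist_iff_exists_strictMono (d : α) {s w : List α} :
    s <+ w ↔ ∃ (n : ℕ) (f : Fin n → ℕ), StrictMono f ∧ (∀ a, f a < w.length) ∧
      ofFn (fun a => w.getD (f a) d) = s := by
  refine ⟨fun h => ?_, fun ⟨n, f, hf, hlt, hs⟩ => hs ▸ ofFn_getD_sublist d hf hlt⟩
  obtain ⟨F, hF⟩ := sublist_iff_exists_fin_orderEmbedding_get_eq.mp h
  refine ⟨s.length, fun a => F a, fun a b hab => F.strictMono hab, fun a => (F a).2, ?_⟩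
  refine ext_get (by simp) fun i _ h => ?_
  simpa using (hF ⟨i, h⟩).symm

theorem exists_three_indices_iff_sublist (d : α) {w : List α} (P : α → α → α → Prop) :
    (∃ i j k, i < j ∧ j < k ∧ k < w.length ∧ P (w.getD i d) (w.getD j d) (w.getD k d)) ↔
      ∃ a b c, [a, b, c] <+ w ∧ P a b c := by
  constructor
  · rintro ⟨i, j, k, hij, hjk, hk, hP⟩
    have hf : StrictMono ![i, j, k] := Fin.strictMono_iff_lt_succ.2 <| by
      simp [Fin.forall_fin_two, hij, hjk]
    have hlt : ∀ a, ![i, j, k] a < w.length := fun a => (hf.monotone (Fin.le_last a)).trans_lt hk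
    exact ⟨_, _, _, by simpa [ofFn_succ] using ofFn_getD_sublist d hf hlt, hP⟩
  · rintro ⟨a, b, c, hs, hP⟩
    obtain ⟨n, f, hf, hlt, hs⟩ := (sublist_iff_exists_strictMono d).mp hs
    obtain rfl : n = 3 := by simpa using congrArg length hs
    simp only [ofFn_succ, ofFn_zero, cons.injEq] at hs
    obtain ⟨rfl, rfl, rfl, -⟩ := hs
    exact ⟨f 0, f 1, f 2, hf (by decide), hf (by decide), hlt 2, hP⟩

theorem exists_four_indices_iff_sublist (d : α) {w : List α} (P : α → α → α → α → Prop) :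
    (∃ i j k l, i < j ∧ j < k ∧ k < l ∧ l < w.length ∧
        P (w.getD i d) (w.getD j d) (w.getD k d) (w.getD l d)) ↔
      ∃ a b c e, [a, b, c, e] <+ w ∧ P a b c e := by
  constructor
  · rintro ⟨i, j, k, l, hij, hjk, hkl, hl, hP⟩
    have hf : StrictMono ![i, j, k, l] := Fin.strictMono_iff_lt_succ.2 <| by
      simp [Fin.forall_fin_succ, hij, hjk, hkl]
    have hlt : ∀ a, ![i, j, k, l] a < w.length :=
      fun a => (hf.monotone (Fin.le_last a)).trans_lt hl
    exact ⟨_, _, _, _, by simpa [ofFn_succ] using ofFn_getD_sublist d hf hlt, hP⟩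
  · rintro ⟨a, b, c, e, hs, hP⟩
    obtain ⟨n, f, hf, hlt, hs⟩ := (sublist_iff_exists_strictMono d).mp hs
    obtain rfl : n = 4 := by simpa using congrArg length hs
    simp only [ofFn_succ, ofFn_zero, cons.injEq] at hs
    obtain ⟨rfl, rfl, rfl, rfl, -⟩ := hs
    exact ⟨f 0, f 1, f 2, f 3, hf (by decide), hf (by decide), hf (by decide), hlt 3, hP⟩

theorem Subset.length_dedup_le [DecidableEq α] {l₁ l₂ : List α} (h : l₁ ⊆ l₂) :
    l₁.dedup.length ≤ l₂.dedup.length :=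
  ((nodup_dedup l₁).subperm fun _ hx => mem_dedup.2 (h (mem_dedup.1 hx))).length_le

end List

theorem contains120_iff {w : List ℕ} :
    Contains120 w ↔ ∃ a b c, [a, b, c] <+ w ∧ c < a ∧ a < b :=
  List.exists_three_indices_iff_sublist 0 fun a b c => c < a ∧ a < b

theorem contains201_iff {w : List ℕ} :
    Contains201 w ↔ ∃ a b c, [a, b, c] <+ w ∧ b < c ∧ c < a :=
  List.exists_three_indices_iff_sublist 0 fun a b c => b < c ∧ c < a

theorem contains1010_iff {w : List ℕ} : Contains1010 w ↔ ∃ a b, [a, b, a, b] <+ w ∧ b < a := by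
  rw [Contains1010, List.exists_four_indices_iff_sublist 0 fun a b c d => b = d ∧ d < a ∧ a = c]
  constructor
  · rintro ⟨a, b, _, _, hs, rfl, hba, rfl⟩
    exact ⟨a, b, hs, hba⟩
  · rintro ⟨a, b, hs, hba⟩
    exact ⟨a, b, a, b, hs, rfl, hba, rfl⟩

theorem containsDec_iff {m : ℕ} {w : List ℕ} :
    ContainsDec m w ↔ ∃ s, s <+ w ∧ s.length = m ∧ s.Pairwise (· > ·) := by
  constructor
  · rintro ⟨f, hf, hlt, hdec⟩
    exact ⟨_, List.ofFn_getD_sublist 0 hf hlt, List.length_ofFn, List.pairwise_ofFn.2 hdec⟩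
  · rintro ⟨s, hs, rfl, hgt⟩
    obtain ⟨n, f, hf, hlt, rfl⟩ := (List.sublist_iff_exists_strictMono 0).mp hs
    rw [List.length_ofFn]
    exact ⟨f, hf, hlt, List.pairwise_ofFn.1 hgt⟩

theorem Contains120.mono {s w : List ℕ} (h : Contains120 s) (hsw : s <+ w) : Contains120 w :=
  let ⟨a, b, c, hs, hp⟩ := contains120_iff.1 h
  contains120_iff.2 ⟨a, b, c, hs.trans hsw, hp⟩

theorem Contains201.mono {s w : List ℕ} (h : Contains201 s) (hsw : s <+ w) : Contains201 w :=
  let ⟨a, b, c, hs, hp⟩ := contains201_iff.1 h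
  contains201_iff.2 ⟨a, b, c, hs.trans hsw, hp⟩

theorem Contains1010.mono {s w : List ℕ} (h : Contains1010 s) (hsw : s <+ w) :
    Contains1010 w :=
  let ⟨a, b, hs, hp⟩ := contains1010_iff.1 h
  contains1010_iff.2 ⟨a, b, hs.trans hsw, hp⟩

theorem ContainsDec.mono {m : ℕ} {s w : List ℕ} (h : ContainsDec m s) (hsw : s <+ w) :
    ContainsDec m w :=
  let ⟨l, hl, hp⟩ := containsDec_iff.1 h
  containsDec_iff.2 ⟨l, hl.trans hsw, hp⟩

theorem containsDec_of_le_length_dedup {m : ℕ} {l : List ℕ} (hl : l.Pairwise (· ≥ ·))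
    (hm : m ≤ l.dedup.length) : ContainsDec m l := by
  have hgt : l.dedup.Pairwise (· > ·) :=
    ((hl.sublist (List.dedup_sublist l)).and (List.nodup_dedup l)).imp fun h =>
      lt_of_le_of_ne h.1 h.2.symm
  exact containsDec_iff.2 ⟨_, (List.take_sublist m _).trans (List.dedup_sublist l),
    by simpa using hm, hgt.sublist (List.take_sublist m _)⟩

def SumIndecomposable (s : List ℕ) : Prop :=
  ∀ l₁ l₂, s = l₁ ++ l₂ → (∀ x ∈ l₁, ∀ y ∈ l₂, x ≤ y) → l₁ = [] ∨ l₂ = []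

theorem sumIndecomposable_cons_append_singleton {x y : ℕ} (s : List ℕ) (hyx : y < x) :
    SumIndecomposable (x :: s ++ [y]) := by
  rintro (_ | ⟨a, l₁⟩) l₂ hs hle
  · exact Or.inl rfl
  rcases l₂.eq_nil_or_concat with rfl | ⟨l₂, b, rfl⟩
  · exact Or.inr rfl
  simp only [List.cons_append, List.cons.injEq, List.concat_eq_append] at hs hle
  obtain ⟨rfl, hs⟩ := hs
  obtain ⟨-, hyb⟩ := List.append_inj' (hs.trans (List.append_assoc _ _ _).symm) rfl
  obtain rfl : y = b := List.singleton_inj.1 hyb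
  exact absurd (hle x List.mem_cons_self y (by simp)) (not_le.2 hyx)

theorem sumIndecomposable_of_pairwise_gt {s : List ℕ} (hs : s.Pairwise (· > ·)) :
    SumIndecomposable s := by
  rintro (_ | ⟨a, l₁⟩) (_ | ⟨b, l₂⟩) rfl hle
  · exact Or.inl rfl
  · exact Or.inl rfl
  · exact Or.inr rfl
  · exact absurd (hle a List.mem_cons_self b List.mem_cons_self)
      (not_le.2 (hs.rel_of_mem_append List.mem_cons_self List.mem_cons_self))

inductive DecreasingBlocks (k : ℕ) : List ℕ → Prop
  | nil : DecreasingBlocks k []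
  | cons {b r : List ℕ} : b ≠ [] → b.Pairwise (· ≥ ·) → b.dedup.length ≤ k →
      (∀ x ∈ b, ∀ y ∈ r, x ≤ y) → DecreasingBlocks k r → DecreasingBlocks k (b ++ r)

namespace DecreasingBlocks

variable {k : ℕ} {w : List ℕ}

theorem exists_block_of_sublist (hw : DecreasingBlocks k w) {s : List ℕ}
    (hs : SumIndecomposable s) (hne : s ≠ []) (hsw : s <+ w) :
    ∃ b : List ℕ, b.Pairwise (· ≥ ·) ∧ b.dedup.length ≤ k ∧ s <+ b := by
  induction hw with
  | nil => exact absurd (List.sublist_nil.1 hsw) hne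
  | @cons b r _ hb hbk hbr _ ih =>
    obtain ⟨l₁, l₂, rfl, h₁, h₂⟩ := List.sublist_append_iff.1 hsw
    rcases hs l₁ l₂ rfl fun x hx y hy => hbr x (h₁.subset hx) y (h₂.subset hy) with rfl | rfl
    · exact ih (by simpa using h₂)
    · exact ⟨b, hb, hbk, by simpa using h₁⟩

theorem not_contains120 (hw : DecreasingBlocks k w) : ¬Contains120 w := by
  rw [contains120_iff]
  rintro ⟨a, b, c, hs, hca, hab⟩
  obtain ⟨l, hl, -, hsl⟩ :=
    hw.exists_block_of_sublist (sumIndecomposable_cons_append_singleton [b] hca)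
      (List.cons_ne_nil _ _) hs
  exact (hl.forall_sublist ((List.sublist_append_left [a, b] [c]).trans hsl)).not_gt hab

theorem not_contains201 (hw : DecreasingBlocks k w) : ¬Contains201 w := by
  rw [contains201_iff]
  rintro ⟨a, b, c, hs, hbc, hca⟩
  obtain ⟨l, hl, -, hsl⟩ :=
    hw.exists_block_of_sublist (sumIndecomposable_cons_append_singleton [b] hca)
      (List.cons_ne_nil _ _) hs
  exact (hl.forall_sublist ((List.sublist_cons_self a [b, c]).trans hsl)).not_gt hbc

theorem not_contains1010 (hw : DecreasingBlocks k w) : ¬Contains1010 w := by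
  rw [contains1010_iff]
  rintro ⟨a, b, hs, hba⟩
  obtain ⟨l, hl, -, hsl⟩ :=
    hw.exists_block_of_sublist (sumIndecomposable_cons_append_singleton [b, a] hba)
      (List.cons_ne_nil _ _) hs
  have hasc : [b, a] <+ [a, b, a, b] := (List.sublist_append_left [b, a] [b]).cons a
  exact (hl.forall_sublist (hasc.trans hsl)).not_gt hba

theorem not_containsDec (hw : DecreasingBlocks k w) : ¬ContainsDec (k + 1) w := by
  rw [containsDec_iff]
  rintro ⟨s, hs, hlen, hgt⟩
  obtain ⟨l, -, hlk, hsl⟩ := hw.exists_block_of_sublist (sumIndecomposable_of_pairwise_gt hgt)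
    (List.ne_nil_of_length_pos (by omega)) hs
  have hnd : s.Nodup := hgt.imp fun h => h.ne'
  have hsk : s.dedup.length ≤ k := hsl.subset.length_dedup_le.trans hlk
  rw [hnd.dedup] at hsk
  omega

end DecreasingBlocks

theorem PopStep.reflTransGen_push_all {k : ℕ} {xs out : List ℕ} :
    ∀ b st : List ℕ, (st.reverse ++ b).Pairwise (· ≥ ·) → (st.reverse ++ b).dedup.length ≤ k →
      Relation.ReflTransGen (PopStep k) (b ++ xs, st, out) (xs, b.reverse ++ st, out)
  | [], _, _, _ => by simpa using Relation.ReflTransGen.refl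
  | x :: b, st, hb, hk => by
    have hx : st = [] ∨ x ≤ st.headI := by
      rcases st with _ | ⟨y, st⟩
      · exact Or.inl rfl
      · exact Or.inr (hb.rel_of_mem_append (by simp) List.mem_cons_self)
    have hsub : x :: st ⊆ st.reverse ++ x :: b := by
      intro z hz
      simp only [List.mem_cons, List.mem_append, List.mem_reverse] at hz ⊢
      tauto
    have hpush := PopStep.push x (b ++ xs) st out hx (hsub.length_dedup_le.trans hk)
    have hrest := PopStep.reflTransGen_push_all (xs := xs) (out := out) b (x :: st)
      (by simpa using hb) (by simpa using hk)
    simpa using hrest.head hpush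

theorem DecreasingBlocks.exists_sorted_run {k : ℕ} {w : List ℕ} (hw : DecreasingBlocks k w)
    {out : List ℕ} (hout : out.Pairwise (· ≤ ·)) (hle : ∀ x ∈ out, ∀ y ∈ w, x ≤ y) :
    ∃ out', Relation.ReflTransGen (PopStep k) (w, [], out) ([], [], out') ∧
      out'.Pairwise (· ≤ ·) := by
  induction hw generalizing out with
  | nil => exact ⟨out, .refl, hout⟩
  | @cons b r hne hb hbk hbr _ ih =>
    have hpush : Relation.ReflTransGen (PopStep k) (b ++ r, [], out) (r, b.reverse, out) := by
      simpa using PopStep.reflTransGen_push_all (xs := r) (out := out) b [] (by simpa) (by simpa)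
    have hpop := PopStep.pop (k := k) r b.reverse out (by simpa)
    have hsorted : (out ++ b.reverse).Pairwise (· ≤ ·) :=
      List.pairwise_append.2 ⟨hout, List.pairwise_reverse.2 hb,
        fun x hx y hy => hle x hx y (List.mem_append_left _ (List.mem_reverse.1 hy))⟩
    have hle' : ∀ x ∈ out ++ b.reverse, ∀ y ∈ r, x ≤ y := by
      intro x hx y hy
      rcases List.mem_append.1 hx with hx | hx
      · exact hle x hx y (List.mem_append_right _ hy)
      · exact hbr x (List.mem_reverse.1 hx) y hy
    obtain ⟨out', hrun, hout'⟩ := ih hsorted hle'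
    exact ⟨out', hpush.trans (hrun.head hpop), hout'⟩

/-- The stack conditions are premises, not conclusions, because the invariant is propagated
backwards from the final state. -/
theorem decreasingBlocks_of_reflTransGen {k : ℕ} {out' : List ℕ}
    (hsort : out'.Pairwise (· ≤ ·)) {p : List ℕ × List ℕ × List ℕ}
    (hrun : Relation.ReflTransGen (PopStep k) p ([], [], out')) :
    p.2.2 <+: out' ∧ (∀ x ∈ p.2.2, ∀ y ∈ p.2.1 ++ p.1, x ≤ y) ∧
      (p.2.1.IsChain (· ≤ ·) → p.2.1.dedup.length ≤ k →
        DecreasingBlocks k (p.2.1.reverse ++ p.1)) := by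
  induction hrun using Relation.ReflTransGen.head_induction_on with
  | refl => exact ⟨List.prefix_refl _, by simp, fun _ _ => .nil⟩
  | head hstep _ ih =>
    obtain ⟨hpre, hle, hblocks⟩ := ih
    cases hstep with
    | push x xs st out hx hxk =>
      refine ⟨hpre, fun a ha y hy => hle a ha y ?_, fun hst _ => ?_⟩
      · simp only [List.mem_append, List.mem_cons] at hy ⊢
        tauto
      have hst' : (x :: st).IsChain (· ≤ ·) := by
        refine List.isChain_cons.2 ⟨fun y hy => ?_, hst⟩
        rcases st with _ | ⟨z, st⟩
        · simp at hy
        · obtain rfl : z = y := by simpa using hy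
          simpa using hx
      simpa using hblocks hst' hxk
    | pop xs st out hne =>
      have hout : (out ++ st).Pairwise (· ≤ ·) := hsort.sublist hpre.sublist
      refine ⟨(List.prefix_append _ _).trans hpre, fun a ha y hy => ?_, fun hst hstk => ?_⟩
      · rcases List.mem_append.1 hy with hy | hy
        · exact hout.rel_of_mem_append ha hy
        · exact hle a (List.mem_append_left _ ha) y (by simpa using hy)
      · have hk : st.reverse.dedup.length ≤ k :=
          (List.reverse_subset.2 (List.Subset.refl _)).length_dedup_le.trans hstk
        refine .cons (by simpa using hne)
          (List.pairwise_reverse.2 (List.isChain_iff_pairwise.1 hst)) hk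
          (fun a ha y hy => hle a (by simp [List.mem_reverse.1 ha]) y (by simpa using hy)) ?_
        simpa using hblocks List.isChain_nil (by simp)

theorem exists_maximal_decreasing_prefix :
    ∀ (x : ℕ) (w : List ℕ), ∃ t r, x :: w = x :: t ++ r ∧ (x :: t).IsChain (· ≥ ·) ∧
      ∀ y ∈ r.head?, ∃ a ∈ x :: t, a < y
  | _, [] => ⟨[], [], rfl, List.isChain_singleton _, by simp⟩
  | x, x' :: w => by
    by_cases hx : x' ≤ x
    · obtain ⟨t, r, hw, ht, hr⟩ := exists_maximal_decreasing_prefix x' w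
      refine ⟨x' :: t, r, by rw [hw]; rfl, List.isChain_cons_cons.2 ⟨hx, ht⟩, fun y hy => ?_⟩
      obtain ⟨a, ha, hay⟩ := hr y hy
      exact ⟨a, List.mem_cons_of_mem x ha, hay⟩
    · exact ⟨[], x' :: w, rfl, List.isChain_singleton _, by simpa using hx⟩

theorem head_le_of_avoids {x a y : ℕ} {t r : List ℕ} (ha : a ∈ x :: t) (hay : a < y)
    (h120 : ¬Contains120 (x :: t ++ y :: r)) (h201 : ¬Contains201 (x :: t ++ y :: r))
    (h1010 : ¬Contains1010 (x :: t ++ y :: r)) : ∀ z ∈ y :: r, x ≤ z := by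
  rw [contains120_iff] at h120
  rw [contains201_iff] at h201
  rw [contains1010_iff] at h1010
  have hxa : a < x → [x, a] <+ x :: t := fun hax =>
    (List.singleton_sublist.2 ((List.mem_cons.1 ha).resolve_left hax.ne)).cons_cons x
  have hy : [y] <+ y :: r := List.singleton_sublist.2 List.mem_cons_self
  have hxy : x ≤ y := by
    by_contra! hyx
    exact h201 ⟨x, a, y, (hxa (hay.trans hyx)).append hy, hay, hyx⟩
  intro z hz
  rcases List.mem_cons.1 hz with rfl | hz
  · exact hxy
  by_contra! hzx
  have hz' : [z] <+ y :: r := List.singleton_sublist.2 (List.mem_cons_of_mem y hz)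
  have hyz : [y, z] <+ y :: r := (List.singleton_sublist.2 hz).cons_cons y
  rcases lt_trichotomy z a with hza | rfl | haz
  · exact h120 ⟨a, y, z, (List.singleton_sublist.2 ha).append hyz, hza, hay⟩
  · rcases hxy.lt_or_eq with hxy | rfl
    · exact h120 ⟨x, y, z, (List.singleton_sublist.2 List.mem_cons_self).append hyz, hzx, hxy⟩
    · exact h1010 ⟨x, z, (hxa hzx).append hyz, hzx⟩
  · exact h201 ⟨x, a, z, (hxa (haz.trans hzx)).append hz', haz, hzx⟩

theorem decreasingBlocks_of_avoids {k : ℕ} : ∀ w : List ℕ, ¬Contains120 w → ¬Contains201 w →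
    ¬Contains1010 w → ¬ContainsDec (k + 1) w → DecreasingBlocks k w
  | [], _, _, _, _ => .nil
  | x :: w, h120, h201, h1010, hdec => by
    obtain ⟨t, r, hw, hchain, hmax⟩ := exists_maximal_decreasing_prefix x w
    have hdecr : (x :: t).Pairwise (· ≥ ·) := List.isChain_iff_pairwise.1 hchain
    have hlen : r.length ≤ w.length := by -- for `termination_by`
      have := congrArg List.length hw
      simp only [List.length_cons, List.cons_append, List.length_append] at this
      omega
    rw [hw] at h120 h201 h1010 hdec ⊢
    have hr : r <+ x :: t ++ r := List.sublist_append_right _ _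
    have hrest := decreasingBlocks_of_avoids r (fun h => h120 (h.mono hr))
      (fun h => h201 (h.mono hr)) (fun h => h1010 (h.mono hr)) (fun h => hdec (h.mono hr))
    have hk : (x :: t).dedup.length ≤ k := by
      by_contra! hk
      exact hdec ((containsDec_of_le_length_dedup hdecr hk).mono (List.sublist_append_left _ _))
    have hle : ∀ u ∈ x :: t, ∀ v ∈ r, u ≤ v := by
      rcases r with _ | ⟨y, r⟩
      · simp
      obtain ⟨a, ha, hay⟩ := hmax y rfl
      intro u hu v hv
      have hux : u ≤ x := by
        rcases List.mem_cons.1 hu with rfl | hu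
        exacts [le_rfl, (List.pairwise_cons.1 hdecr).1 u hu]
      exact hux.trans (head_le_of_avoids ha hay h120 h201 h1010 v hv)
    exact .cons (List.cons_ne_nil _ _) hdecr hk hle hrest
termination_by w => w.length

/-- A word is sortable by a pop stack of depth k iff it avoids 120, 201, 1010 and the
strictly decreasing pattern k(k-1)...10 of length k+1. -/
theorem pop_stack_depth_sortable_iff (k : ℕ) (w : List ℕ) :
    PopSortableDepth k w ↔
      ¬ Contains120 w ∧ ¬ Contains201 w ∧ ¬ Contains1010 w ∧ ¬ ContainsDec (k + 1) w := by
  constructor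
  · rintro ⟨out, hrun, hsorted⟩
    have hw : DecreasingBlocks k w := by
      simpa using (decreasingBlocks_of_reflTransGen hsorted hrun).2.2 List.isChain_nil (by simp)
    exact ⟨hw.not_contains120, hw.not_contains201, hw.not_contains1010, hw.not_containsDec⟩
  · rintro ⟨h120, h201, h1010, hdec⟩
    exact (decreasingBlocks_of_avoids w h120 h201 h1010 hdec).exists_sorted_run .nil (by simp)
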